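/- arXiv:2504.11176 — 2 statements merged into one kernel-verified Lean document; each statement's English description precedes it below -/
import Mathlib

section
/- Let 𝒩 be a nest of subsets of {1,...,s}, i.e., a collection of subsets of cardinality at least 2 such that any two members are either disjoint or nested. Then there exists a forest structure ≺ on {1,...,s} covering 𝒩: a partial order in which every element has at most one immediate predecessor (parent), such that every N ∈ 𝒩 is a ≺-subtree, and for every k ∈ {1,...,s}, the descendant set T_{⪯k} = {j : j ⪯ k} belongs to 𝒩 if and only if k has at least one child. -/
/-!
Order the ground set linearly (as `Fin s` already is) and let `a ≺ b` when `a ≠ b` and `b` is the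
largest element of some member of `𝒩` containing `a`. Nestedness makes `≺` transitive, makes the
set of `≺`-ancestors of any element a chain (so parents are unique), and makes every member of `𝒩`
convex with its maximum as common upper bound. If `k` has a child then `k` is the maximum of some
member of `𝒩`, and the descendant set of `k` is the largest such member; conversely a descendant
set with two elements contains some `j ≺ k`, and a `≺`-maximal such `j` is a child of `k`.
-/

def IsNest {α : Type*} (𝒩 : Set (Set α)) : Prop :=
  ∀ A ∈ 𝒩, ∀ B ∈ 𝒩, (A ∩ B).Nonempty → A ⊆ B ∨ B ⊆ A

def RelCovBy {α : Type*} (r : α → α → Prop) (a b : α) : Prop :=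
  r a b ∧ ¬ ∃ l, r a l ∧ r l b

section RelCovBy

variable {α : Type*} {r : α → α → Prop}

theorem RelCovBy.eq_of_trichotomous {k k₁ k₂ : α} (h₁ : RelCovBy r k k₁) (h₂ : RelCovBy r k k₂)
    (htri : r k₁ k₂ ∨ k₁ = k₂ ∨ r k₂ k₁) : k₁ = k₂ := by
  rcases htri with h | h | h
  · exact absurd ⟨k₁, h₁.1, h⟩ h₂.2
  · exact h
  · exact absurd ⟨k₂, h₂.1, h⟩ h₁.2

theorem exists_relCovBy_of_rel [LinearOrder α] [Finite α] (hlt : ∀ a b, r a b → a < b)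
    {j k : α} (h : r j k) : ∃ i, RelCovBy r i k := by
  obtain ⟨i, hi, hmax⟩ := Set.exists_max_image {i | r i k} id (Set.toFinite _) ⟨j, h⟩
  exact ⟨i, hi, fun ⟨l, hil, hlk⟩ => (hmax l hlk).not_gt (hlt _ _ hil)⟩

end RelCovBy

section NestOrder

variable {α : Type*} [LinearOrder α] {𝒩 : Set (Set α)} {N : Set α} {a b c : α}

def nestOrder (𝒩 : Set (Set α)) (a b : α) : Prop :=
  a ≠ b ∧ ∃ N ∈ 𝒩, a ∈ N ∧ IsGreatest N b

theorem nestOrder.lt (h : nestOrder 𝒩 a b) : a < b := by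
  obtain ⟨hne, N, -, haN, hb⟩ := h
  exact (hb.2 haN).lt_of_ne hne

theorem nestOrder_or_eq_of_mem (hN : N ∈ 𝒩) (hb : IsGreatest N b) (ha : a ∈ N) :
    nestOrder 𝒩 a b ∨ a = b := by
  by_cases h : a = b
  · exact Or.inr h
  · exact Or.inl ⟨h, N, hN, ha, hb⟩

theorem IsNest.subset_of_isGreatest_lt (h : IsNest 𝒩) {P : Set α} (hP : P ∈ 𝒩) (hN : N ∈ 𝒩)
    (hPN : (P ∩ N).Nonempty) (hb : IsGreatest P b) (hc : c ∈ N) (hbc : b < c) : P ⊆ N :=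
  (h P hP N hN hPN).resolve_right fun hNP => (hb.2 (hNP hc)).not_gt hbc

theorem IsNest.nestOrder_trans (h : IsNest 𝒩) (hab : nestOrder 𝒩 a b) (hbc : nestOrder 𝒩 b c) :
    nestOrder 𝒩 a c := by
  have hac : a < c := hab.lt.trans hbc.lt
  obtain ⟨-, N, hN, haN, hb⟩ := hab
  obtain ⟨hbc, M, hM, hbM, hc⟩ := hbc
  have hNM : N ⊆ M :=
    h.subset_of_isGreatest_lt hN hM ⟨b, hb.1, hbM⟩ hb hc.1 ((hc.2 hbM).lt_of_ne hbc)
  exact ⟨hac.ne, M, hM, hNM haN, hc⟩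

theorem IsNest.isStrictOrder_nestOrder (h : IsNest 𝒩) : IsStrictOrder α (nestOrder 𝒩) where
  irrefl _ ha := ha.1 rfl
  trans _ _ _ := h.nestOrder_trans

theorem IsNest.nestOrder_trichotomous (h : IsNest 𝒩) {k k₁ k₂ : α} (h₁ : nestOrder 𝒩 k k₁)
    (h₂ : nestOrder 𝒩 k k₂) : nestOrder 𝒩 k₁ k₂ ∨ k₁ = k₂ ∨ nestOrder 𝒩 k₂ k₁ := by
  obtain ⟨-, N₁, hN₁, hkN₁, hk₁⟩ := h₁
  obtain ⟨-, N₂, hN₂, hkN₂, hk₂⟩ := h₂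
  rcases h N₁ hN₁ N₂ hN₂ ⟨k, hkN₁, hkN₂⟩ with h₁₂ | h₂₁
  · rcases nestOrder_or_eq_of_mem hN₂ hk₂ (h₁₂ hk₁.1) with h | h
    · exact Or.inl h
    · exact Or.inr (Or.inl h)
  · rcases nestOrder_or_eq_of_mem hN₁ hk₁ (h₂₁ hk₂.1) with h | h
    · exact Or.inr (Or.inr h)
    · exact Or.inr (Or.inl h.symm)

theorem IsNest.mem_of_nestOrder_of_nestOrder (h : IsNest 𝒩) (hN : N ∈ 𝒩) {k₀ k₁ k₂ : α}
    (hk₁ : k₁ ∈ N) (hk₂ : k₂ ∈ N) (h₁₀ : nestOrder 𝒩 k₁ k₀) (h₀₂ : nestOrder 𝒩 k₀ k₂) :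
    k₀ ∈ N := by
  obtain ⟨-, P, hP, hk₁P, hk₀⟩ := h₁₀
  exact h.subset_of_isGreatest_lt hP hN ⟨k₁, hk₁P, hk₁⟩ hk₀ hk₂ h₀₂.lt hk₀.1

theorem IsNest.exists_isGreatest_isGreatest [Finite α] (h : IsNest 𝒩) (hN : N ∈ 𝒩)
    (hb : IsGreatest N b) : ∃ M, IsGreatest {N ∈ 𝒩 | IsGreatest N b} M := by
  obtain ⟨M, hM⟩ := Set.Finite.exists_maximal (Set.toFinite {N ∈ 𝒩 | IsGreatest N b}) ⟨N, hN, hb⟩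
  refine ⟨M, hM.prop, fun N' hN' => ?_⟩
  rcases h N' hN'.1 M hM.prop.1 ⟨b, hN'.2.1, hM.prop.2.1⟩ with h' | h'
  · exact h'
  · exact (hM.eq_of_subset hN' h').ge

theorem setOf_nestOrder_or_eq_eq (hM : IsGreatest {N ∈ 𝒩 | IsGreatest N b} M) :
    {a | nestOrder 𝒩 a b ∨ a = b} = M := by
  ext a
  constructor
  · rintro (⟨-, N, hN, haN, hb⟩ | rfl)
    · exact hM.2 ⟨hN, hb⟩ haN
    · exact hM.1.2.1
  · exact nestOrder_or_eq_of_mem hM.1.1 hM.1.2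

theorem IsNest.setOf_nestOrder_or_eq_mem [Finite α] (h : IsNest 𝒩) (hab : nestOrder 𝒩 a b) :
    {c | nestOrder 𝒩 c b ∨ c = b} ∈ 𝒩 := by
  obtain ⟨-, N, hN, -, hb⟩ := hab
  obtain ⟨M, hM⟩ := h.exists_isGreatest_isGreatest hN hb
  exact setOf_nestOrder_or_eq_eq hM ▸ hM.1.1

end NestOrder

/-- every nest `𝒩` of subsets of `{1, ..., s}` (members of cardinality `≥ 2`,
any two members disjoint or nested) is covered by a forest: there is a strict partial order
`r` on `Fin s` in which every element has at most one immediate successor (parent), every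
`N ∈ 𝒩` is an `r`-subtree, and for every `k` the descendant set `{j | j ⪯ k}` lies in `𝒩`
if and only if `k` has at least one child. -/
theorem exists_covering_forest (s : ℕ) (𝒩 : Set (Set (Fin s)))
    (hcard : ∀ N ∈ 𝒩, 2 ≤ N.ncard)
    (hnest : ∀ A ∈ 𝒩, ∀ B ∈ 𝒩, (A ∩ B).Nonempty → A ⊆ B ∨ B ⊆ A) :
    ∃ r : Fin s → Fin s → Prop,
      IsStrictOrder (Fin s) r ∧
      -- every element has at most one parent (immediate successor)
      (∀ k k₁ k₂ : Fin s, (r k k₁ ∧ ¬ ∃ l, r k l ∧ r l k₁) →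
        (r k k₂ ∧ ¬ ∃ l, r k l ∧ r l k₂) → k₁ = k₂) ∧
      -- every member of the nest is an `r`-subtree
      (∀ N ∈ 𝒩,
        (∀ k₁ ∈ N, ∀ k₂ ∈ N, ∀ k₀, r k₁ k₀ → r k₀ k₂ → k₀ ∈ N) ∧
        (∀ k₁ ∈ N, ∀ k₂ ∈ N, ∃ q ∈ N, (r k₁ q ∨ k₁ = q) ∧ (r k₂ q ∨ k₂ = q))) ∧
      -- descendant sets in the nest correspond exactly to elements with a child
      (∀ k : Fin s,
        {j | r j k ∨ j = k} ∈ 𝒩 ↔ ∃ j, r j k ∧ ¬ ∃ l, r j l ∧ r l k) := by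
  have h𝒩 : IsNest 𝒩 := hnest
  refine ⟨nestOrder 𝒩, h𝒩.isStrictOrder_nestOrder, ?_, fun N hN => ?_, fun k => ⟨?_, ?_⟩⟩
  · exact fun k k₁ k₂ h₁ h₂ =>
      RelCovBy.eq_of_trichotomous h₁ h₂ (h𝒩.nestOrder_trichotomous h₁.1 h₂.1)
  · have hne : N.Nonempty := Set.nonempty_of_ncard_ne_zero (by have := hcard N hN; omega)
    obtain ⟨m, hm⟩ : ∃ m, IsGreatest N m := N.exists_max_image id N.toFinite hne
    exact ⟨fun k₁ h₁ k₂ h₂ k₀ => h𝒩.mem_of_nestOrder_of_nestOrder hN h₁ h₂,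
      fun k₁ h₁ k₂ h₂ =>
        ⟨m, hm.1, nestOrder_or_eq_of_mem hN hm h₁, nestOrder_or_eq_of_mem hN hm h₂⟩⟩
  · intro hD
    obtain ⟨j, hj, hjk⟩ := Set.exists_ne_of_one_lt_ncard (hcard _ hD) k
    exact exists_relCovBy_of_rel (fun _ _ => nestOrder.lt) (hj.resolve_right hjk)
  · rintro ⟨j, hjk, -⟩
    exact h𝒩.setOf_nestOrder_or_eq_mem hjk
end

section
/- Let q be a point of the r-th order tangent bundle T^{(r)}M lying in the zero section (i.e., 0 · q = q under the reparametrization action), with basepoint p ∈ M. Let f be a smooth function and (x_1, ..., x_m) local coordinates near p. Then for all i ≤ r, the differential of the i-th lift satisfies d_q f^{(i)} = Σ_a (∂f/∂x_a)(p) · d_q x_a^{(i)}. In particular, the i-th lifts of a finite collection of functions have linearly independent differentials at q if and only if the functions have linearly independent differentials at p. -/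
/-- The `i`-th lift `f^{(i)}` of a function `f : ℝ^m → ℝ` to the `r`-th order tangent bundle
`T^{(r)}ℝ^m = (ℝ^m)^{r+1}`, where `q : Fin (r+1) → ℝ^m` represents the class of the curve
`t ↦ Σ_j t^j • q j`:  `f^{(i)}(q) = (1/i!) (d^i/dt^i)|₀ f(γ_q(t))`. -/
noncomputable def lift (m r i : ℕ) (f : (Fin m → ℝ) → ℝ)
    (q : Fin (r + 1) → Fin m → ℝ) : ℝ :=
  ((i.factorial : ℝ))⁻¹ *
    iteratedDeriv i (fun t : ℝ => f fun a => ∑ j : Fin (r + 1), t ^ (j : ℕ) * q j a) 0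

open scoped ContDiff

section helpers

variable {E : Type*} [NormedAddCommGroup E] [NormedSpace ℝ E]

/-- Derivative in the time direction of a function on `E × ℝ`. -/
noncomputable def Dt (G : E × ℝ → ℝ) : E × ℝ → ℝ := fun x => fderiv ℝ G x (0, 1)

lemma contDiff_apply_fderiv {G : E × ℝ → ℝ} (hG : ContDiff ℝ ∞ G) (u : E × ℝ) :
    ContDiff ℝ ∞ fun x => fderiv ℝ G x u :=
  (hG.fderiv_right (m := ∞) (by simp)).clm_apply contDiff_const

lemma contDiff_Dt {G : E × ℝ → ℝ} (hG : ContDiff ℝ ∞ G) : ContDiff ℝ ∞ (Dt G) :=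
  contDiff_apply_fderiv hG _

lemma contDiff_DtIter {G : E × ℝ → ℝ} (hG : ContDiff ℝ ∞ G) (k : ℕ) :
    ContDiff ℝ ∞ (Dt^[k] G) := by
  induction k generalizing G with
  | zero => exact hG
  | succ k ih => rw [Function.iterate_succ_apply]; exact ih (contDiff_Dt hG)

lemma deriv_slice {G : E × ℝ → ℝ} (hG : ContDiff ℝ ∞ G) (q : E) (t : ℝ) :
    deriv (fun s => G (q, s)) t = Dt G (q, t) := by
  have h1 : HasFDerivAt G (fderiv ℝ G (q, t)) (q, t) :=
    ((hG.differentiable (by simp)) (q, t)).hasFDerivAt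
  have h2 : HasDerivAt (fun s : ℝ => ((q, s) : E × ℝ)) ((0 : E), (1 : ℝ)) t :=
    (hasDerivAt_const t q).prodMk (hasDerivAt_id t)
  exact (h1.comp_hasDerivAt t h2).deriv

lemma iteratedDeriv_slice {G : E × ℝ → ℝ} (hG : ContDiff ℝ ∞ G) (k : ℕ) (q : E) (t : ℝ) :
    iteratedDeriv k (fun s => G (q, s)) t = Dt^[k] G (q, t) := by
  induction k generalizing G with
  | zero => simp [iteratedDeriv_zero]
  | succ k ih =>
    rw [iteratedDeriv_succ']
    have h : deriv (fun s => G (q, s)) = fun s => Dt G (q, s) := funext (deriv_slice hG q)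
    rw [h, ih (contDiff_Dt hG), Function.iterate_succ_apply]

lemma fderiv_slice {G : E × ℝ → ℝ} (hG : ContDiff ℝ ∞ G) (q : E) (t : ℝ) (v : E) :
    fderiv ℝ (fun w => G (w, t)) q v = fderiv ℝ G (q, t) (v, 0) := by
  have h1 : HasFDerivAt G (fderiv ℝ G (q, t)) (q, t) :=
    ((hG.differentiable (by simp)) (q, t)).hasFDerivAt
  have h2 : HasFDerivAt (fun w : E => ((w, t) : E × ℝ)) (ContinuousLinearMap.inl ℝ E ℝ) q :=
    hasFDerivAt_prodMk_left q t
  have h4 : HasFDerivAt (fun w => G (w, t))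
      ((fderiv ℝ G (q, t)).comp (ContinuousLinearMap.inl ℝ E ℝ)) q := h1.comp q h2
  rw [h4.fderiv]
  simp

lemma fderiv_fderiv_apply {G : E × ℝ → ℝ} (hG : ContDiff ℝ ∞ G) (x : E × ℝ) (u w : E × ℝ) :
    fderiv ℝ (fun y => fderiv ℝ G y u) x w = fderiv ℝ (fderiv ℝ G) x w u := by
  have hd : DifferentiableAt ℝ (fderiv ℝ G) x :=
    ((hG.fderiv_right (m := ∞) (by simp)).differentiable (by simp)) x
  have h2 : HasFDerivAt (fun y => fderiv ℝ G y u)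
      ((ContinuousLinearMap.apply ℝ ℝ u).comp (fderiv ℝ (fderiv ℝ G) x)) x :=
    (ContinuousLinearMap.apply ℝ ℝ u).hasFDerivAt.comp x hd.hasFDerivAt
  rw [h2.fderiv]
  rfl

lemma Dt_swap {G : E × ℝ → ℝ} (hG : ContDiff ℝ ∞ G) (v : E) (x : E × ℝ) :
    fderiv ℝ (Dt G) x (v, 0) = Dt (fun y => fderiv ℝ G y (v, 0)) x := by
  have hdiff : ∀ y, HasFDerivAt G (fderiv ℝ G y) y := fun y =>
    ((hG.differentiable (by simp)) y).hasFDerivAt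
  have hd : HasFDerivAt (fderiv ℝ G) (fderiv ℝ (fderiv ℝ G) x) x :=
    (((hG.fderiv_right (m := ∞) (by simp)).differentiable (by simp)) x).hasFDerivAt
  have hsymm := second_derivative_symmetric hdiff hd (v, 0) ((0 : E), (1 : ℝ))
  show fderiv ℝ (fun y => fderiv ℝ G y (0, 1)) x (v, 0)
      = fderiv ℝ (fun y => fderiv ℝ G y (v, 0)) x (0, 1)
  rw [fderiv_fderiv_apply hG x _ _, fderiv_fderiv_apply hG x _ _]
  exact hsymm

lemma Dv_DtIter {G : E × ℝ → ℝ} (hG : ContDiff ℝ ∞ G) (k : ℕ) (v : E) (x : E × ℝ) :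
    fderiv ℝ (Dt^[k] G) x (v, 0) = Dt^[k] (fun y => fderiv ℝ G y (v, 0)) x := by
  induction k generalizing G x with
  | zero => rfl
  | succ k ih =>
    rw [Function.iterate_succ_apply, ih (contDiff_Dt hG), Function.iterate_succ_apply]
    have h : (fun y => fderiv ℝ (Dt G) y (v, 0)) = Dt fun y => fderiv ℝ G y (v, 0) :=
      funext (Dt_swap hG v)
    rw [h]

end helpers

lemma iteratedDeriv_monomial (k : ℕ) : ∀ (j : ℕ) (c : ℝ),
    iteratedDeriv k (fun t : ℝ => c * t ^ j) 0 = c * (if j = k then (k.factorial : ℝ) else 0) := by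
  induction k with
  | zero =>
    intro j c
    rw [iteratedDeriv_zero]
    cases j with
    | zero => simp
    | succ j => simp [zero_pow]
  | succ k ih =>
    intro j c
    rw [iteratedDeriv_succ']
    cases j with
    | zero =>
      have h1 : deriv (fun t : ℝ => c * t ^ 0) = fun t : ℝ => (0 : ℝ) * t ^ 0 := by
        funext t; simp
      rw [h1, ih 0 0]
      simp
    | succ j =>
      have h1 : deriv (fun t : ℝ => c * t ^ (j + 1)) = fun t : ℝ => (c * (j + 1)) * t ^ j := by
        funext t
        rw [deriv_const_mul _ (differentiableAt_pow _), deriv_pow_field]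
        push_cast; ring
      rw [h1, ih j (c * (j + 1))]
      by_cases h : j = k
      · subst h
        simp [Nat.factorial_succ]
        push_cast; ring
      · have h2 : ¬(j + 1 = k + 1) := by omega
        simp [h, h2]

lemma iteratedDeriv_finset_sum {ι : Type*} (s : Finset ι) (k : ℕ) :
    ∀ (g : ι → ℝ → ℝ), (∀ j ∈ s, ContDiff ℝ ∞ (g j)) → ∀ x : ℝ,
      iteratedDeriv k (fun t => ∑ j ∈ s, g j t) x = ∑ j ∈ s, iteratedDeriv k (g j) x := by
  induction k with
  | zero => intro g hg x; simp
  | succ k ih =>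
    intro g hg x
    rw [iteratedDeriv_succ']
    have h1 : deriv (fun t => ∑ j ∈ s, g j t) = fun t => ∑ j ∈ s, deriv (g j) t := by
      funext t
      exact deriv_fun_sum fun j hj => ((hg j hj).differentiable (by simp)).differentiableAt
    have h2 : ∀ j ∈ s, ContDiff ℝ ∞ (deriv (g j)) := by
      intro j hj
      exact (contDiff_infty_iff_deriv.mp (hg j hj)).2
    rw [h1, ih (fun j => deriv (g j)) h2 x]
    simp [iteratedDeriv_succ']

lemma key_lift (m r i : ℕ) (hi : i < r + 1) (f : (Fin m → ℝ) → ℝ) (hf : ContDiff ℝ ∞ f)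
    (p : Fin m → ℝ) (q₀ : Fin (r + 1) → Fin m → ℝ)
    (hq0 : q₀ 0 = p) (hq : ∀ j : Fin (r + 1), j ≠ 0 → q₀ j = 0)
    (v : Fin (r + 1) → Fin m → ℝ) :
    fderiv ℝ (lift m r i f) q₀ v = fderiv ℝ f p (v ⟨i, hi⟩) := by
  set G : ((Fin (r + 1) → Fin m → ℝ) × ℝ) → ℝ :=
    fun x => f fun a => ∑ j : Fin (r + 1), x.2 ^ (j : ℕ) * x.1 j a with hGdef
  have hc : ContDiff ℝ ∞ fun x : (Fin (r + 1) → Fin m → ℝ) × ℝ =>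
      (fun a => ∑ j : Fin (r + 1), x.2 ^ (j : ℕ) * x.1 j a : Fin m → ℝ) := by
    apply contDiff_pi.mpr
    intro a
    apply ContDiff.sum
    intro j _
    exact (contDiff_snd.pow _).mul ((contDiff_pi.mp (contDiff_pi.mp contDiff_fst j)) a)
  have hG : ContDiff ℝ ∞ G := hf.comp hc
  -- rewrite lift through Dt iterates
  have hlift : lift m r i f = fun q => (i.factorial : ℝ)⁻¹ * Dt^[i] G (q, 0) := by
    funext q
    rw [lift]
    congr 1
    exact iteratedDeriv_slice hG i q 0
  have hDts : ContDiff ℝ ∞ fun q : Fin (r + 1) → Fin m → ℝ => Dt^[i] G (q, 0) :=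
    (contDiff_DtIter hG i).comp (contDiff_id.prodMk contDiff_const)
  rw [hlift, fderiv_const_mul ((hDts.differentiable (by simp)) q₀) ((i.factorial : ℝ)⁻¹)]
  rw [ContinuousLinearMap.smul_apply, smul_eq_mul]
  have h1 : fderiv ℝ (fun q => Dt^[i] G (q, 0)) q₀ v = fderiv ℝ (Dt^[i] G) (q₀, 0) (v, 0) :=
    fderiv_slice (contDiff_DtIter hG i) q₀ 0 v
  have h2 := Dv_DtIter hG i v (q₀, 0)
  have hDv : ContDiff ℝ ∞ fun y : (Fin (r + 1) → Fin m → ℝ) × ℝ => fderiv ℝ G y (v, 0) :=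
    contDiff_apply_fderiv hG _
  have h3 : Dt^[i] (fun y => fderiv ℝ G y (v, 0)) (q₀, 0)
      = iteratedDeriv i (fun t => fderiv ℝ G (q₀, t) (v, 0)) 0 :=
    (iteratedDeriv_slice hDv i q₀ 0).symm
  -- the base curve is constantly p
  have hcurve : ∀ t : ℝ, (fun a => ∑ j : Fin (r + 1), t ^ (j : ℕ) * q₀ j a) = p := by
    intro t; funext a
    rw [Finset.sum_eq_single (0 : Fin (r + 1))]
    · simp [hq0]
    · intro j _ hj; rw [hq j hj]; simp
    · simp
  -- compute the horizontal derivative of G along v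
  have hL : ∀ t : ℝ, fderiv ℝ G (q₀, t) (v, 0)
      = fderiv ℝ f p (fun a => ∑ j : Fin (r + 1), t ^ (j : ℕ) * v j a) := by
    intro t
    rw [← fderiv_slice hG q₀ t v]
    set L : (Fin (r + 1) → Fin m → ℝ) →L[ℝ] (Fin m → ℝ) :=
      ContinuousLinearMap.pi fun a => ∑ j : Fin (r + 1),
        t ^ (j : ℕ) • ((ContinuousLinearMap.proj a).comp
          (ContinuousLinearMap.proj (R := ℝ) (φ := fun _ : Fin (r + 1) => Fin m → ℝ) j))
      with hLdef
    have hLval : ∀ w, L w = fun a => ∑ j : Fin (r + 1), t ^ (j : ℕ) * w j a := by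
      intro w; funext a
      simp [hLdef, ContinuousLinearMap.pi_apply, ContinuousLinearMap.sum_apply]
    have hfp : HasFDerivAt f (fderiv ℝ f p) (L q₀) := by
      rw [show L q₀ = p from (hLval q₀).trans (hcurve t)]
      exact ((hf.differentiable (by simp)) p).hasFDerivAt
    have hcomp := hfp.comp q₀ (L.hasFDerivAt (x := q₀))
    have heq : (fun w => G (w, t)) = fun w => f (L w) := by
      funext w
      rw [hGdef, hLval w]
    have hcomp' : HasFDerivAt (fun w => f (L w)) ((fderiv ℝ f p).comp L) q₀ := hcomp
    rw [heq, hcomp'.fderiv]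
    rw [ContinuousLinearMap.comp_apply, hLval v]
  -- the resulting function of t is a polynomial
  have hpoly : (fun t : ℝ => fderiv ℝ G (q₀, t) (v, 0))
      = fun t : ℝ => ∑ j : Fin (r + 1), fderiv ℝ f p (v j) * t ^ (j : ℕ) := by
    funext t
    rw [hL t]
    have hsum : (fun a => ∑ j : Fin (r + 1), t ^ (j : ℕ) * v j a)
        = ∑ j : Fin (r + 1), t ^ (j : ℕ) • v j := by
      funext a; simp [Finset.sum_apply]
    rw [hsum, map_sum]
    refine Finset.sum_congr rfl fun j _ => ?_
    rw [map_smul, smul_eq_mul]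
    ring
  have hmono : iteratedDeriv i
      (fun t : ℝ => ∑ j : Fin (r + 1), fderiv ℝ f p (v j) * t ^ (j : ℕ)) 0
      = fderiv ℝ f p (v ⟨i, hi⟩) * (i.factorial : ℝ) := by
    rw [iteratedDeriv_finset_sum Finset.univ i
      (fun j t => fderiv ℝ f p (v j) * t ^ (j : ℕ))
      (fun j _ => contDiff_const.mul (contDiff_id.pow _)) 0]
    rw [Finset.sum_eq_single (⟨i, hi⟩ : Fin (r + 1))]
    · rw [iteratedDeriv_monomial]
      simp
    · intro j _ hj
      rw [iteratedDeriv_monomial]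
      have hne : (j : ℕ) ≠ i := fun h => hj (Fin.ext h)
      simp [hne]
    · simp
  rw [h1, h2, h3, hpoly, hmono]
  have hfac : (i.factorial : ℝ) ≠ 0 := Nat.cast_ne_zero.mpr (Nat.factorial_ne_zero i)
  field_simp

lemma clm_expand {m : ℕ} (φ : (Fin m → ℝ) →L[ℝ] ℝ) (w : Fin m → ℝ) :
    φ w = ∑ a : Fin m, φ (Pi.single a 1) * w a := by
  conv_lhs => rw [← Finset.univ_sum_single w]
  rw [map_sum]
  refine Finset.sum_congr rfl fun a _ => ?_
  have h2 : (Pi.single a (w a) : Fin m → ℝ) = w a • (Pi.single a 1 : Fin m → ℝ) := by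
    funext b
    by_cases hb : b = a
    · subst hb; simp
    · simp [Pi.single_eq_of_ne hb]
  rw [h2, map_smul, smul_eq_mul, mul_comm]

/-- let `q₀ ∈ T^{(r)}M` lie in the zero section with basepoint `p`, let `f` be
smooth and `i ≤ r`.  Then `d_{q₀} f^{(i)} = Σ_a (∂f/∂x_a)(p) · d_{q₀} x_a^{(i)}`, i.e. the
differential of the lift applied to `v` is `Σ_a (∂f/∂x_a)(p) * v i a`.  In particular, the
`i`-th lifts of a collection of smooth functions have linearly independent differentials at
`q₀` if and only if the functions have linearly independent differentials at `p`. -/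
theorem fderiv_lift_zeroSection (m r i : ℕ) (hi : i ≤ r)
    (f : (Fin m → ℝ) → ℝ) (hf : ContDiff ℝ (⊤ : ℕ∞) f)
    (p : Fin m → ℝ) (q₀ : Fin (r + 1) → Fin m → ℝ)
    (hq0 : q₀ 0 = p) (hq : ∀ j : Fin (r + 1), j ≠ 0 → q₀ j = 0) :
    (∀ v : Fin (r + 1) → Fin m → ℝ,
        fderiv ℝ (lift m r i f) q₀ v
          = ∑ a : Fin m, fderiv ℝ f p (Pi.single a 1) * v ⟨i, by omega⟩ a) ∧
      ∀ (k : ℕ) (g : Fin k → (Fin m → ℝ) → ℝ), (∀ c, ContDiff ℝ (⊤ : ℕ∞) (g c)) →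
        ((LinearIndependent ℝ fun c => fderiv ℝ (lift m r i (g c)) q₀) ↔
          LinearIndependent ℝ fun c => fderiv ℝ (g c) p) := by
  have hi' : i < r + 1 := by omega
  constructor
  · intro v
    rw [key_lift m r i hi' f (hf.of_le (by simp)) p q₀ hq0 hq v]
    exact clm_expand _ _
  · intro k g hg
    set π : (Fin (r + 1) → Fin m → ℝ) →L[ℝ] (Fin m → ℝ) :=
      ContinuousLinearMap.proj (R := ℝ) (φ := fun _ : Fin (r + 1) => Fin m → ℝ) ⟨i, hi'⟩
      with hπ
    let Φ : ((Fin m → ℝ) →L[ℝ] ℝ) →ₗ[ℝ] ((Fin (r + 1) → Fin m → ℝ) →L[ℝ] ℝ) :=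
      { toFun := fun ψ => ψ.comp π
        map_add' := fun ψ₁ ψ₂ => ContinuousLinearMap.add_comp ψ₁ ψ₂ π
        map_smul' := fun c ψ => ContinuousLinearMap.smul_comp c ψ π }
    have hker : LinearMap.ker Φ = ⊥ := by
      rw [LinearMap.ker_eq_bot]
      intro ψ₁ ψ₂ hψ
      ext w
      have h1 := congrArg (fun L : (Fin (r + 1) → Fin m → ℝ) →L[ℝ] ℝ =>
        L (Pi.single (⟨i, hi'⟩ : Fin (r + 1)) w)) hψ
      simpa [Φ, hπ] using h1
    have hcomp : (fun c => fderiv ℝ (lift m r i (g c)) q₀)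
        = Φ ∘ fun c => fderiv ℝ (g c) p := by
      funext c
      refine ContinuousLinearMap.ext fun v => ?_
      rw [key_lift m r i hi' (g c) ((hg c).of_le (by simp)) p q₀ hq0 hq v]
      rfl
    rw [hcomp, LinearMap.linearIndependent_iff Φ hker]
end
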